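/- arXiv:1412.8133 — 2 statements merged into one kernel-verified Lean document; each statement's English description precedes it below -/
import Mathlib

section
/- Let c > 0 and define p : ℝ → ℝ by p(L) = L³·(c − 2L)·(2c − L). Then p attains a strict global maximum on the open interval (0, c/2) at the unique point L* = c·(1 − √(2/5)); that is, L* ∈ (0, c/2) and for every L ∈ (0, c/2) with L ≠ L*, p(L) < p(L*). -/
/-- For `c > 0`, the function `p L = L³ (c − 2L)(2c − L)` attains a strict global
maximum on `(0, c/2)` at the unique point `L* = c (1 − √(2/5))`. -/
theorem purcell_strict_global_max (c : ℝ) (hc : 0 < c)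
    (p : ℝ → ℝ) (hp : ∀ L, p L = L ^ 3 * (c - 2 * L) * (2 * c - L))
    (Lstar : ℝ) (hLstar : Lstar = c * (1 - Real.sqrt (2 / 5))) :
    Lstar ∈ Set.Ioo 0 (c / 2) ∧
      ∀ L ∈ Set.Ioo 0 (c / 2), L ≠ Lstar → p L < p Lstar := by
  set s : ℝ := Real.sqrt (2 / 5) with hs
  have hs0 : 0 ≤ s := Real.sqrt_nonneg _
  have hs2 : s ^ 2 = 2 / 5 := Real.sq_sqrt (by norm_num)
  have hs1 : s < 1 := by nlinarith
  have hshalf : 1 / 2 < s := by nlinarith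
  have hmem : Lstar ∈ Set.Ioo 0 (c / 2) := by
    rw [hLstar]
    constructor
    · nlinarith
    · nlinarith
  refine ⟨hmem, ?_⟩
  rintro L ⟨hL0, hL2⟩ hne
  rw [hp, hp, hLstar]
  -- g(L) > 0 on (0, c/2)
  have hg : 0 < -2 * L ^ 3 + (1 + 4 * s) * c * L ^ 2 + (-2 / 5 + 2 * s) * c ^ 2 * L
      + (-3 / 5 + 6 / 5 * s) * c ^ 3 := by
    have h1 : -2 * L ^ 3 ≥ -(c ^ 2 / 2) * L := by
      nlinarith [mul_pos hL0 (mul_pos (show (0:ℝ) < c - 2 * L by linarith) (show (0:ℝ) < c + 2 * L by linarith))]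
    nlinarith [mul_pos (mul_pos hc hL0) hL0, mul_pos (mul_pos hc hc) hL0,
      mul_pos (mul_pos hc hc) hc]
  have hsq : 0 < (L - c * (1 - s)) ^ 2 := by
    have : L - c * (1 - s) ≠ 0 := by
      intro h
      apply hne
      rw [hLstar]
      linarith
    positivity
  have hfac : (c * (1 - s)) ^ 3 * (c - 2 * (c * (1 - s))) * (2 * c - c * (1 - s))
      - L ^ 3 * (c - 2 * L) * (2 * c - L)
      = (L - c * (1 - s)) ^ 2 * (-2 * L ^ 3 + (1 + 4 * s) * c * L ^ 2
        + (-2 / 5 + 2 * s) * c ^ 2 * L + (-3 / 5 + 6 / 5 * s) * c ^ 3) := by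
    linear_combination (c ^ 5 + 2 * L * c ^ 4 + 3 * L ^ 2 * c ^ 3 - 6 * L ^ 3 * c ^ 2
      - 4 * s * c ^ 5 - 2 * s * L * c ^ 4 - 4 * s * L ^ 2 * c ^ 3 + 5 * s ^ 2 * c ^ 5
      - 2 * s ^ 3 * c ^ 5) * hs2
  nlinarith [mul_pos hsq hg]
end

section
/- Let c > 0, p(L) = L³(c − 2L)(2c − L), and L* = c(1 − √(2/5)). Then p is strictly increasing on the interval (0, L*] and strictly decreasing on the interval [L*, c/2). -/
/-!
The derivative of `L³(c − 2L)(2c − L)` factors as `10 L² (L − c(1 − √(2/5))) (L − c(1 + √(2/5)))`.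
Since `1/2 < √(2/5) < 1`, on `(0, c/2)` only the middle factor changes sign, at `L*`, so the
derivative is positive on `(0, L*)` and negative on `(L*, c/2)`.
-/

open Real Set

lemma half_lt_sqrt_two_fifths : 1 / 2 < √(2 / 5) :=
  (lt_sqrt (by norm_num)).2 (by norm_num)

lemma sqrt_two_fifths_lt_one : √(2 / 5) < 1 :=
  (sqrt_lt' one_pos).2 (by norm_num)

lemma hasDerivAt_purcell (c x : ℝ) :
    HasDerivAt (fun L ↦ L ^ 3 * (c - 2 * L) * (2 * c - L))
      (10 * x ^ 2 * (x - c * (1 - √(2 / 5))) * (x - c * (1 + √(2 / 5)))) x := by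
  have hsq : √(2 / 5) ^ 2 = 2 / 5 := sq_sqrt (by norm_num)
  have hexpanded : HasDerivAt (fun L ↦ 2 * c ^ 2 * L ^ 3 - 5 * c * L ^ 4 + 2 * L ^ 5)
      (2 * c ^ 2 * (3 * x ^ 2) - 5 * c * (4 * x ^ 3) + 2 * (5 * x ^ 4)) x := by
    have := (((hasDerivAt_pow 3 x).const_mul (2 * c ^ 2)).sub
      ((hasDerivAt_pow 4 x).const_mul (5 * c))).add ((hasDerivAt_pow 5 x).const_mul 2)
    norm_num at this
    exact this
  convert hexpanded using 1
  · funext L; ring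
  · linear_combination (-10) * c ^ 2 * x ^ 2 * hsq

/-- For `c > 0`, `p L = L³(c − 2L)(2c − L)` is strictly increasing on `(0, L*]`
and strictly decreasing on `[L*, c/2)`, where `L* = c(1 − √(2/5))`. -/
theorem purcell_monotonicity (c : ℝ) (hc : 0 < c)
    (p : ℝ → ℝ) (hp : ∀ L, p L = L ^ 3 * (c - 2 * L) * (2 * c - L))
    (Lstar : ℝ) (hLstar : Lstar = c * (1 - Real.sqrt (2 / 5))) :
    StrictMonoOn p (Set.Ioc 0 Lstar) ∧ StrictAntiOn p (Set.Ico Lstar (c / 2)) := by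
  obtain rfl : p = fun L ↦ L ^ 3 * (c - 2 * L) * (2 * c - L) := funext hp
  subst hLstar
  have hhalf := half_lt_sqrt_two_fifths
  have hone := sqrt_two_fifths_lt_one
  have hcont : Continuous fun L : ℝ ↦ L ^ 3 * (c - 2 * L) * (2 * c - L) := by fun_prop
  have hroot : c * (1 - √(2 / 5)) < c * (1 + √(2 / 5)) :=
    mul_lt_mul_of_pos_left (by linarith) hc
  constructor
  · refine strictMonoOn_of_deriv_pos (convex_Ioc _ _) hcont.continuousOn fun x hx ↦ ?_
    rw [interior_Ioc] at hx
    obtain ⟨hx0, hxL⟩ := hx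
    rw [(hasDerivAt_purcell c x).deriv]
    have := mul_pos_of_neg_of_neg (mul_neg_of_pos_of_neg (pow_pos hx0 2) (sub_neg.2 hxL))
      (sub_neg.2 (hxL.trans hroot))
    linarith
  · refine strictAntiOn_of_deriv_neg (convex_Ico _ _) hcont.continuousOn fun x hx ↦ ?_
    rw [interior_Ico] at hx
    obtain ⟨hLx, hxc⟩ := hx
    have hx0 : 0 < x := (mul_pos hc (sub_pos.2 hone)).trans hLx
    have hxroot : x < c * (1 + √(2 / 5)) := hxc.trans (by nlinarith)
    rw [(hasDerivAt_purcell c x).deriv]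
    have := mul_neg_of_pos_of_neg (mul_pos (pow_pos hx0 2) (sub_pos.2 hLx)) (sub_neg.2 hxroot)
    linarith
end
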